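/- The concavification Ŵ(μ) = sup_{τ ∈ T_μ} ∫_{Δ(S)} W(ν) dτ(ν) is upper semicontinuous on Δ(S). -/

import Mathlib

open MeasureTheory Finset

noncomputable section

/-- Expected utility `Σ_s u(s,a) ν(s)` of action `a` under belief `ν ∈ Δ(S)`. -/
def expUtil {S α : Type*} [Fintype S] (u : S → α → ℝ) (ν : stdSimplex ℝ S) (a : α) : ℝ :=
  ∑ s, u s a * (ν : S → ℝ) s

/-- Admissible (optimal) actions `A*(ν) = argmax_a Σ_s u(s,a) ν(s)`. -/
def admissible {S α : Type*} [Fintype S] (u : S → α → ℝ) (ν : stdSimplex ℝ S) : Set α :=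
  {a | ∀ b, expUtil u ν b ≤ expUtil u ν a}

/-- The sender's gain
`W(ν) = Σ_t η(t) · max_{a ∈ A*_t(ν)} Σ_s v(s,a) ν(s)` (ties broken in the sender's favor);
the maximum over the (finite nonempty) set of admissible action profiles is expressed as a
supremum. -/
def senderGain {S L : Type*} [Fintype S] [Fintype L] [DecidableEq L]
    {A T : L → Type*} [∀ l, Fintype (A l)] [∀ l, Fintype (T l)]
    (u : ∀ l, T l → S → A l → ℝ) (v : S → (∀ l, A l) → ℝ) (η : ∀ l, T l → ℝ)
    (ν : stdSimplex ℝ S) : ℝ :=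
  ∑ t : ∀ l, T l, (∏ l, η l (t l)) *
    sSup {x : ℝ | ∃ a : ∀ l, A l, (∀ l, a l ∈ admissible (u l (t l)) ν) ∧
      x = ∑ s, v s a * (ν : S → ℝ) s}

/-- `T_μ` : Borel probability measures on `Δ(S)` with barycenter `μ`, with the topology of
weak convergence. -/
def barycentric {S : Type*} [Fintype S] (μ : stdSimplex ℝ S) :
    Set (ProbabilityMeasure (stdSimplex ℝ S)) :=
  {τ | ∀ s : S, (∫ ν, (ν : S → ℝ) s ∂(τ : Measure (stdSimplex ℝ S))) = (μ : S → ℝ) s}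

/-- The concavification `Ŵ(μ) = sup_{τ ∈ T_μ} ∫ W dτ`. -/
def concavification {S L : Type*} [Fintype S] [Fintype L] [DecidableEq L]
    {A T : L → Type*} [∀ l, Fintype (A l)] [∀ l, Fintype (T l)]
    (u : ∀ l, T l → S → A l → ℝ) (v : S → (∀ l, A l) → ℝ) (η : ∀ l, T l → ℝ)
    (μ : stdSimplex ℝ S) : ℝ :=
  sSup {x : ℝ | ∃ τ ∈ barycentric μ,
    x = ∫ ν, senderGain u v η ν ∂(τ : Measure (stdSimplex ℝ S))}

/-!
Let `W` be a function on the simplex with `|W| ≤ M` that is upper semicontinuous. Its hypograph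
truncated at `-M` is compact, hence so is its convex hull `K` (Carathéodory). A point `(μ, y)` of
`K` is a finite convex combination of points `(νᵢ, yᵢ)` with `yᵢ ≤ W νᵢ`, so the corresponding
finitely supported measure lies in `T_μ` and has `∫ W ≥ y`; conversely, Jensen's inequality puts
`(μ, ∫ W dτ)` into `K` for every `τ ∈ T_μ`. Hence `Ŵ(μ)` is the top of the fibre of `K` over `μ`,
and the top of the fibres of a compact set is upper semicontinuous.

The sender's gain is such a `W`: for each type profile it is the largest of finitely many linear
payoffs over the admissible action profiles, and near a belief `μ` only profiles admissible at `μ`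
stay admissible, because admissibility is a closed condition.
-/

theorem isCompact_convexHull {E : Type*} [NormedAddCommGroup E]
    [NormedSpace ℝ E] [FiniteDimensional ℝ E] {s : Set E} (hs : IsCompact s) :
    IsCompact (convexHull ℝ s) := by
  have key : convexHull ℝ s = ⋃ k ∈ range (Module.finrank ℝ E + 2),
      (fun p : (Fin k → ℝ) × (Fin k → E) => ∑ i, p.1 i • p.2 i) ''
        (stdSimplex ℝ (Fin k) ×ˢ Set.univ.pi fun _ => s) := by
    apply Set.Subset.antisymm
    · intro x hx
      obtain ⟨ι, _, z, w, hzs, hz, hw₀, hw₁, rfl⟩ := eq_pos_convex_span_of_mem_convexHull hx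
      have hcard : Fintype.card ι < Module.finrank ℝ E + 2 := by
        have := hz.card_le_finrank_succ
        have := Submodule.finrank_le (vectorSpan ℝ (Set.range z))
        omega
      set e := Fintype.equivFin ι
      refine Set.mem_biUnion (mem_range.2 hcard) ⟨(w ∘ e.symm, z ∘ e.symm), ⟨⟨?_, ?_⟩, ?_⟩, ?_⟩
      · exact fun i => (hw₀ _).le
      · simpa [Function.comp_def, e.symm.sum_comp] using hw₁
      · exact fun i _ => hzs (Set.mem_range_self _)
      · exact e.symm.sum_comp fun i => w i • z i
    · simp only [Set.iUnion_subset_iff]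
      rintro k - _ ⟨⟨w, z⟩, ⟨⟨hw₀, hw₁⟩, hz⟩, rfl⟩
      exact (convex_convexHull ℝ s).sum_mem (fun i _ => hw₀ i) hw₁
        fun i _ => subset_convexHull ℝ s (hz i (Set.mem_univ i))
  rw [key]
  exact (range _).isCompact_biUnion fun k _ =>
    ((isCompact_stdSimplex ℝ (Fin k)).prod (isCompact_univ_pi fun _ => hs)).image (by fun_prop)

section Fiber

variable {X : Type*} [TopologicalSpace X] {K : Set (X × ℝ)}

theorem IsCompact.bddAbove_fiber (hK : IsCompact K) (x : X) : BddAbove {r | (x, r) ∈ K} :=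
  (hK.image continuous_snd).bddAbove.mono fun _ h => Set.mem_image_of_mem Prod.snd h

theorem IsCompact.le_sSup_fiber (hK : IsCompact K) {x : X} {r : ℝ} (hr : (x, r) ∈ K) :
    r ≤ sSup {r | (x, r) ∈ K} :=
  le_csSup (hK.bddAbove_fiber x) hr

theorem IsCompact.sSup_fiber_mem [T2Space X] (hK : IsCompact K) {x : X} {r : ℝ}
    (hr : (x, r) ∈ K) : (x, sSup {r | (x, r) ∈ K}) ∈ K :=
  (hK.isClosed.preimage (Continuous.prodMk_right x)).csSup_mem ⟨r, hr⟩ (hK.bddAbove_fiber x)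

theorem IsCompact.upperSemicontinuous_sSup_fiber [T2Space X] {Y : Type*} [TopologicalSpace Y]
    (hK : IsCompact K) {f : Y → X} (hf : Continuous f) (hne : ∀ y, ∃ r, (f y, r) ∈ K) :
    UpperSemicontinuous fun y => sSup {r | (f y, r) ∈ K} := by
  intro y₀ c hc
  have hC : IsClosed (Prod.fst '' (K ∩ {p | c ≤ p.2})) :=
    ((hK.inter_right (isClosed_le continuous_const continuous_snd)).image continuous_fst).isClosed
  have hy₀ : f y₀ ∉ Prod.fst '' (K ∩ {p | c ≤ p.2}) := by
    rintro ⟨⟨x, r⟩, ⟨hr, hcr⟩, rfl⟩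
    exact (hcr.trans (hK.le_sSup_fiber hr)).not_gt hc
  filter_upwards [(hC.isOpen_compl.preimage hf).mem_nhds hy₀] with y (hy : f y ∉ _)
  obtain ⟨r, hr⟩ := hne y
  by_contra! h
  exact hy ⟨(f y, _), ⟨hK.sSup_fiber_mem hr, h⟩, rfl⟩

end Fiber

theorem isProbabilityMeasure_sum_smul_dirac {ι X : Type*} [Fintype ι] [MeasurableSpace X]
    {w : ι → ℝ} (hw₀ : ∀ i, 0 ≤ w i) (hw₁ : ∑ i, w i = 1) (x : ι → X) :
    IsProbabilityMeasure (∑ i, ENNReal.ofReal (w i) • Measure.dirac (x i)) := by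
  constructor
  simp [Measure.finsetSum_apply, ← ENNReal.ofReal_sum_of_nonneg fun i _ => hw₀ i, hw₁]

theorem integral_sum_smul_dirac {ι X E : Type*} [Fintype ι] [MeasurableSpace X]
    [MeasurableSingletonClass X] [NormedAddCommGroup E] [NormedSpace ℝ E] [CompleteSpace E]
    {w : ι → ℝ} (hw₀ : ∀ i, 0 ≤ w i) (x : ι → X) (f : X → E) :
    ∫ p, f p ∂(∑ i, ENNReal.ofReal (w i) • Measure.dirac (x i)) = ∑ i, w i • f (x i) := by
  rw [integral_finsetSum_measure fun i _ =>
    (integrable_dirac enorm_lt_top).smul_measure ENNReal.ofReal_ne_top]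
  simp [integral_smul_measure, ENNReal.toReal_ofReal (hw₀ _)]

theorem Set.finite_setOf_exists_and_eq {α β : Type*} [Finite α] (P : α → Prop) (f : α → β) :
    {r | ∃ a, P a ∧ r = f a}.Finite :=
  (Set.finite_range f).subset <| by rintro _ ⟨a, -, rfl⟩; exact Set.mem_range_self a

theorem exists_sSup_setOf_exists_and_eq {α : Type*} [Finite α] {P : α → Prop} (f : α → ℝ)
    (h : ∃ a, P a) : ∃ a, P a ∧ sSup {r | ∃ a, P a ∧ r = f a} = f a := by
  obtain ⟨a, ha⟩ := h
  obtain ⟨b, hb, hsup⟩ := Set.Nonempty.csSup_mem (s := {r | ∃ a, P a ∧ r = f a})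
    ⟨f a, a, ha, rfl⟩ (Set.finite_setOf_exists_and_eq P f)
  exact ⟨b, hb, hsup⟩

theorem upperSemicontinuous_sSup_of_isClosed_setOf {X α : Type*} [TopologicalSpace X]
    [Finite α] {P : α → X → Prop} {f : α → X → ℝ} (hP : ∀ a, IsClosed {x | P a x})
    (hne : ∀ x, ∃ a, P a x) (hf : ∀ a, Continuous (f a)) :
    UpperSemicontinuous fun x => sSup {r | ∃ a, P a x ∧ r = f a x} := by
  intro x₀ c hc
  have hev : ∀ a, ∀ᶠ x in nhds x₀, P a x → f a x < c := by
    intro a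
    by_cases ha : P a x₀
    · have hlt : f a x₀ < c :=
        (le_csSup (Set.finite_setOf_exists_and_eq _ _).bddAbove ⟨a, ha, rfl⟩).trans_lt hc
      filter_upwards [(hf a).continuousAt.eventually_lt continuousAt_const hlt] with x hx _
      exact hx
    · filter_upwards [(hP a).isOpen_compl.mem_nhds ha] with x hx hxa
      exact absurd hxa hx
  filter_upwards [Filter.eventually_all.2 hev] with x hx
  obtain ⟨b, hb, hsup⟩ := exists_sSup_setOf_exists_and_eq (f · x) (hne x)
  exact hsup ▸ hx b hb

theorem abs_sum_mul_le_of_mem_stdSimplex {ι : Type*} [Fintype ι] {w : ι → ℝ}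
    (hw : w ∈ stdSimplex ℝ ι) {g : ι → ℝ} {C : ℝ} (hg : ∀ i, |g i| ≤ C) :
    |∑ i, w i * g i| ≤ C :=
  abs_le.2 <| (convex_Icc (-C) C).sum_mem (fun i _ => hw.1 i) hw.2 fun i _ => abs_le.1 (hg i)

theorem prod_mem_stdSimplex_pi {L : Type*} [Fintype L] [DecidableEq L] {T : L → Type*}
    [∀ l, Fintype (T l)] {η : ∀ l, T l → ℝ} (hη : ∀ l, η l ∈ stdSimplex ℝ (T l)) :
    (fun t : ∀ l, T l => ∏ l, η l (t l)) ∈ stdSimplex ℝ (∀ l, T l) :=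
  ⟨fun t => prod_nonneg fun l _ => (hη l).1 (t l), by
    rw [← Fintype.prod_sum]
    exact prod_eq_one fun l _ => (hη l).2⟩

section Concavify

variable {S : Type*} [Fintype S]

-- `concavification u v η` is `concavify (senderGain u v η)` by definition.
def concavify (W : stdSimplex ℝ S → ℝ) (μ : stdSimplex ℝ S) : ℝ :=
  sSup {x | ∃ τ ∈ barycentric μ, x = ∫ ν, W ν ∂(τ : Measure (stdSimplex ℝ S))}

def graphPoint (W : stdSimplex ℝ S → ℝ) (ν : stdSimplex ℝ S) : (S → ℝ) × ℝ :=
  ((ν : S → ℝ), W ν)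

def boundedHypograph (W : stdSimplex ℝ S → ℝ) (M : ℝ) : Set ((S → ℝ) × ℝ) :=
  (fun q : stdSimplex ℝ S × ℝ => ((q.1 : S → ℝ), q.2)) '' {q | -M ≤ q.2 ∧ q.2 ≤ W q.1}

variable {W : stdSimplex ℝ S → ℝ} {M : ℝ}

theorem isCompact_boundedHypograph (hW : ∀ ν, W ν ≤ M) (hWu : UpperSemicontinuous W) :
    IsCompact (boundedHypograph W M) := by
  have hcl : IsClosed {q : stdSimplex ℝ S × ℝ | -M ≤ q.2 ∧ q.2 ≤ W q.1} :=
    (isClosed_le continuous_const continuous_snd).inter hWu.IsClosed_hypograph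
  have hsub : {q : stdSimplex ℝ S × ℝ | -M ≤ q.2 ∧ q.2 ≤ W q.1} ⊆ Set.univ ×ˢ Set.Icc (-M) M :=
    fun q hq => ⟨trivial, hq.1, hq.2.trans (hW q.1)⟩
  exact ((isCompact_univ.prod isCompact_Icc).of_isClosed_subset hcl hsub).image (by fun_prop)

theorem graphPoint_mem_boundedHypograph (hW : ∀ ν, -M ≤ W ν) (ν : stdSimplex ℝ S) :
    graphPoint W ν ∈ boundedHypograph W M :=
  ⟨(ν, W ν), ⟨hW ν, le_rfl⟩, rfl⟩

theorem integrable_coe_stdSimplex (τ : ProbabilityMeasure (stdSimplex ℝ S)) :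
    Integrable (fun ν : stdSimplex ℝ S => (ν : S → ℝ)) (τ : Measure (stdSimplex ℝ S)) :=
  continuous_subtype_val.integrable_of_hasCompactSupport (HasCompactSupport.of_compactSpace _)

theorem mem_barycentric_iff {μ : stdSimplex ℝ S} {τ : ProbabilityMeasure (stdSimplex ℝ S)} :
    τ ∈ barycentric μ ↔ ∫ ν, (ν : S → ℝ) ∂(τ : Measure (stdSimplex ℝ S)) = μ := by
  rw [funext_iff]
  exact forall_congr' fun s => by rw [eval_integral (integrable_coe_stdSimplex τ).eval]

theorem integral_graphPoint (hW : ∀ ν, |W ν| ≤ M) (hWm : Measurable W)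
    (τ : ProbabilityMeasure (stdSimplex ℝ S)) :
    ∫ ν, graphPoint W ν ∂(τ : Measure (stdSimplex ℝ S)) =
      (∫ ν, (ν : S → ℝ) ∂(τ : Measure (stdSimplex ℝ S)), ∫ ν, W ν ∂(τ : Measure (stdSimplex ℝ S))) :=
  integral_pair (integrable_coe_stdSimplex τ) (.of_bound hWm.aestronglyMeasurable M (.of_forall hW))

theorem mem_convexHull_of_mem_barycentric (hW : ∀ ν, |W ν| ≤ M) (hWu : UpperSemicontinuous W)
    {μ : stdSimplex ℝ S} {τ : ProbabilityMeasure (stdSimplex ℝ S)} (hτ : τ ∈ barycentric μ) :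
    ((μ : S → ℝ), ∫ ν, W ν ∂(τ : Measure (stdSimplex ℝ S))) ∈
      convexHull ℝ (boundedHypograph W M) := by
  rw [← mem_barycentric_iff.1 hτ, ← integral_graphPoint hW hWu.measurable τ]
  refine (convex_convexHull ℝ _).integral_mem
    (isCompact_convexHull (isCompact_boundedHypograph (fun ν => (abs_le.1 (hW ν)).2) hWu)).isClosed
    (.of_forall fun ν => subset_convexHull ℝ _ ?_)
    ((integrable_coe_stdSimplex τ).prodMk (.of_bound hWu.measurable.aestronglyMeasurable M (.of_forall hW)))
  exact graphPoint_mem_boundedHypograph (fun ν => (abs_le.1 (hW ν)).1) ν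

theorem exists_mem_barycentric_le_integral {μ : stdSimplex ℝ S} {y : ℝ}
    (hy : ((μ : S → ℝ), y) ∈ convexHull ℝ (boundedHypograph W M)) :
    ∃ τ ∈ barycentric μ, y ≤ ∫ ν, W ν ∂(τ : Measure (stdSimplex ℝ S)) := by
  obtain ⟨ι, _, w, z, hw₀, hw₁, hz, hzy⟩ := mem_convexHull_iff_exists_fintype.1 hy
  choose q hq hqz using hz
  have hfst : ∑ i, w i • ((q i).1 : S → ℝ) = μ := by
    simpa [← hqz, Prod.fst_sum] using congrArg Prod.fst hzy
  have hsnd : ∑ i, w i * (q i).2 = y := by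
    simpa [← hqz, Prod.snd_sum] using congrArg Prod.snd hzy
  have := isProbabilityMeasure_sum_smul_dirac hw₀ hw₁ fun i => (q i).1
  refine ⟨⟨_, this⟩, mem_barycentric_iff.2 ?_, ?_⟩
  · exact (integral_sum_smul_dirac hw₀ _ _).trans hfst
  · rw [ProbabilityMeasure.coe_mk, integral_sum_smul_dirac hw₀, ← hsnd]
    exact sum_le_sum fun i _ => mul_le_mul_of_nonneg_left (hq i).2 (hw₀ i)

theorem concavify_eq_sSup_fiber (hW : ∀ ν, |W ν| ≤ M) (hWu : UpperSemicontinuous W)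
    (μ : stdSimplex ℝ S) :
    concavify W μ = sSup {y | ((μ : S → ℝ), y) ∈ convexHull ℝ (boundedHypograph W M)} :=
  csSup_eq_csSup_of_forall_exists_le
    (by rintro _ ⟨τ, hτ, rfl⟩; exact ⟨_, mem_convexHull_of_mem_barycentric hW hWu hτ, le_rfl⟩)
    fun _ hy =>
      let ⟨τ, hτ, hle⟩ := exists_mem_barycentric_le_integral hy
      ⟨_, ⟨τ, hτ, rfl⟩, hle⟩

theorem upperSemicontinuous_concavify (hW : ∀ ν, |W ν| ≤ M) (hWu : UpperSemicontinuous W) :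
    UpperSemicontinuous (concavify W) := by
  rw [funext (concavify_eq_sSup_fiber hW hWu)]
  exact (isCompact_convexHull (isCompact_boundedHypograph (fun ν => (abs_le.1 (hW ν)).2) hWu))
    |>.upperSemicontinuous_sSup_fiber continuous_subtype_val fun μ =>
      ⟨W μ, subset_convexHull ℝ _
        (graphPoint_mem_boundedHypograph (fun ν => (abs_le.1 (hW ν)).1) μ)⟩

end Concavify

section Receivers

variable {S α : Type*} [Fintype S]

theorem continuous_expUtil (u : S → α → ℝ) (a : α) :
    Continuous fun ν : stdSimplex ℝ S => expUtil u ν a :=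
  continuous_finsetSum _ fun s _ =>
    continuous_const.mul ((continuous_apply s).comp continuous_subtype_val)

theorem abs_expUtil_le {u : S → α → ℝ} {a : α} {C : ℝ} (hu : ∀ s, |u s a| ≤ C)
    (ν : stdSimplex ℝ S) : |expUtil u ν a| ≤ C := by
  simpa only [expUtil, mul_comm] using
    abs_sum_mul_le_of_mem_stdSimplex (show (ν : S → ℝ) ∈ stdSimplex ℝ S from ν.2) hu

theorem isClosed_setOf_mem_admissible (u : S → α → ℝ) (a : α) :
    IsClosed {ν : stdSimplex ℝ S | a ∈ admissible u ν} := by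
  show IsClosed {ν | ∀ b, expUtil u ν b ≤ expUtil u ν a}
  simp only [Set.ofPred_forall]
  exact isClosed_iInter fun b => isClosed_le (continuous_expUtil u b) (continuous_expUtil u a)

theorem admissible_nonempty [Finite α] [Nonempty α] (u : S → α → ℝ) (ν : stdSimplex ℝ S) :
    (admissible u ν).Nonempty :=
  Finite.exists_max (expUtil u ν)

end Receivers

section SenderGain

variable {S L : Type*} [Fintype S] {A T : L → Type*} (u : ∀ l, T l → S → A l → ℝ)

theorem isClosed_setOf_admissible_profile (t : ∀ l, T l) (a : ∀ l, A l) :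
    IsClosed {ν : stdSimplex ℝ S | ∀ l, a l ∈ admissible (u l (t l)) ν} := by
  simp only [Set.ofPred_forall]
  exact isClosed_iInter fun l => isClosed_setOf_mem_admissible (u l (t l)) (a l)

variable [∀ l, Fintype (A l)] [∀ l, Nonempty (A l)]

theorem exists_admissible_profile (t : ∀ l, T l) (ν : stdSimplex ℝ S) :
    ∃ a : ∀ l, A l, ∀ l, a l ∈ admissible (u l (t l)) ν :=
  ⟨fun l => (admissible_nonempty (u l (t l)) ν).some,
    fun l => (admissible_nonempty (u l (t l)) ν).some_mem⟩

variable [Fintype L] [DecidableEq L] [∀ l, Fintype (T l)]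
  (v : S → (∀ l, A l) → ℝ) (η : ∀ l, T l → ℝ)

theorem abs_senderGain_le (hη : ∀ l, η l ∈ stdSimplex ℝ (T l)) (ν : stdSimplex ℝ S) :
    |senderGain u v η ν| ≤ ‖v‖ := by
  refine abs_sum_mul_le_of_mem_stdSimplex (prod_mem_stdSimplex_pi hη) fun t => ?_
  obtain ⟨b, -, hb⟩ := exists_sSup_setOf_exists_and_eq
    (fun a => ∑ s, v s a * (ν : S → ℝ) s) (exists_admissible_profile u t ν)
  rw [hb]
  exact abs_expUtil_le (fun s => (norm_le_pi_norm (v s) b).trans (norm_le_pi_norm v s)) ν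

theorem upperSemicontinuous_senderGain (hη : ∀ l t, 0 ≤ η l t) :
    UpperSemicontinuous (senderGain u v η) :=
  upperSemicontinuous_sum fun t _ => (continuous_const_mul _).comp_upperSemicontinuous
    (upperSemicontinuous_sSup_of_isClosed_setOf (α := ∀ l, A l)
      (P := fun a ν => ∀ l, a l ∈ admissible (u l (t l)) ν) (f := fun a ν => expUtil v ν a)
      (isClosed_setOf_admissible_profile u t) (exists_admissible_profile u t) (continuous_expUtil v))
    (monotone_mul_left_of_nonneg (prod_nonneg fun l _ => hη l (t l)))

end SenderGain

theorem concavification_upperSemicontinuous_general {S : Type*} [Fintype S]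
    {L : Type*} [Fintype L] [DecidableEq L]
    {A : L → Type*} [∀ l, Fintype (A l)] [∀ l, Nonempty (A l)]
    {T : L → Type*} [∀ l, Fintype (T l)]
    (u : ∀ l, T l → S → A l → ℝ) (v : S → (∀ l, A l) → ℝ)
    (η : ∀ l, T l → ℝ) (hη : ∀ l, η l ∈ stdSimplex ℝ (T l)) :
    UpperSemicontinuous (concavification u v η) :=
  upperSemicontinuous_concavify (abs_senderGain_le u v η hη)
    (upperSemicontinuous_senderGain u v η fun l => (hη l).1)

/-- The concavification `Ŵ` is upper semicontinuous on `Δ(S)`. -/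
theorem concavification_upperSemicontinuous {S : Type*} [Fintype S] [Nonempty S]
    {L : Type*} [Fintype L] [DecidableEq L]
    {A : L → Type*} [∀ l, Fintype (A l)] [∀ l, Nonempty (A l)]
    {T : L → Type*} [∀ l, Fintype (T l)] [∀ l, Nonempty (T l)]
    (u : ∀ l, T l → S → A l → ℝ) (v : S → (∀ l, A l) → ℝ)
    (η : ∀ l, T l → ℝ) (hη : ∀ l, η l ∈ stdSimplex ℝ (T l)) :
    UpperSemicontinuous (concavification u v η) :=
  concavification_upperSemicontinuous_general u v η hη

end
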